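/- The equation q₁(c) = q₂(c), where q₁(c) = π/(4(√(1−c²) − c·arccos c)) and q₂(c) = 5/(2(7c − 2 − 10/π)), has exactly one root in the interval ((2π+10)/(7π), 1). -/

import Mathlib

open Real

noncomputable def q₁ (c : ℝ) : ℝ := π / (4 * (Real.sqrt (1 - c^2) - c * Real.arccos c))

noncomputable def q₂ (c : ℝ) : ℝ := 5 / (2 * (7 * c - 2 - 10 / π))

/-!
With `f c = √(1 - c²) - c arccos c`, the equation `q₁ c = q₂ c` on the interval is
`7πc - 2π - 10 = 10 f c`. Since `f' = -arccos ≤ 0` and `f 1 = 0`, `f` is positive on `[-1, 1)`, so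
both denominators are positive there, and `c ↦ 7πc - 2π - 10 - 10 f c` is strictly increasing,
negative at the left endpoint and equal to `5π - 10 > 0` at `1`.
-/

theorem hasDerivAt_sqrt_one_sub_sq_sub_mul_arccos {c : ℝ} (h₁ : -1 < c) (h₂ : c < 1) :
    HasDerivAt (fun x => √(1 - x ^ 2) - x * arccos x) (-arccos c) c := by
  have hc : 0 < 1 - c ^ 2 := by nlinarith
  have hsqrt : HasDerivAt (fun x : ℝ => √(1 - x ^ 2)) (1 / (2 * √(1 - c ^ 2)) * -(2 * c)) c :=
    (hasDerivAt_sqrt hc.ne').comp c (by simpa using (hasDerivAt_pow 2 c).const_sub 1)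
  refine (hsqrt.sub ((hasDerivAt_id' c).mul (hasDerivAt_arccos h₁.ne' h₂.ne))).congr_deriv ?_
  have : √(1 - c ^ 2) ≠ 0 := by positivity
  field_simp
  ring

theorem strictAntiOn_sqrt_one_sub_sq_sub_mul_arccos :
    StrictAntiOn (fun x : ℝ => √(1 - x ^ 2) - x * arccos x) (Set.Icc (-1) 1) := by
  refine strictAntiOn_of_deriv_neg (convex_Icc _ _) (by fun_prop) fun x hx => ?_
  rw [interior_Icc] at hx
  rw [(hasDerivAt_sqrt_one_sub_sq_sub_mul_arccos hx.1 hx.2).deriv, neg_lt_zero]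
  exact arccos_pos.2 hx.2

theorem sqrt_one_sub_sq_sub_mul_arccos_pos {c : ℝ} (h₁ : -1 ≤ c) (h₂ : c < 1) :
    0 < √(1 - c ^ 2) - c * arccos c := by
  have := strictAntiOn_sqrt_one_sub_sq_sub_mul_arccos ⟨h₁, h₂.le⟩ ⟨by norm_num, le_rfl⟩ h₂
  simpa using this

theorem strictMonoOn_sub_sqrt_one_sub_sq_sub_mul_arccos :
    StrictMonoOn (fun x => 7 * π * x - 2 * π - 10 - 10 * (√(1 - x ^ 2) - x * arccos x))
      (Set.Icc (-1) 1) := fun x hx y hy hxy => by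
  have := strictAntiOn_sqrt_one_sub_sq_sub_mul_arccos hx hy hxy
  nlinarith [pi_pos]

theorem q₁_eq_q₂_iff {c : ℝ} (hf : 0 < √(1 - c ^ 2) - c * arccos c)
    (hg : 0 < 7 * c - 2 - 10 / π) :
    q₁ c = q₂ c ↔ 7 * π * c - 2 * π - 10 - 10 * (√(1 - c ^ 2) - c * arccos c) = 0 := by
  have hpi := pi_pos.ne'
  rw [q₁, q₂, div_eq_div_iff (by positivity) (by positivity)]
  field_simp
  constructor <;> intro h <;> linarith

theorem existsUnique_mem_Ioo_eq_zero_of_strictMonoOn {φ : ℝ → ℝ} {a b : ℝ} (hab : a ≤ b)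
    (hcont : ContinuousOn φ (Set.Icc a b)) (hmono : StrictMonoOn φ (Set.Icc a b))
    (ha : φ a < 0) (hb : 0 < φ b) : ∃! c, c ∈ Set.Ioo a b ∧ φ c = 0 := by
  obtain ⟨c, hc, hφc⟩ := intermediate_value_Ioo hab hcont ⟨ha, hb⟩
  refine ⟨c, ⟨hc, hφc⟩, fun y ⟨hy, hφy⟩ => ?_⟩
  exact hmono.injOn (Set.Ioo_subset_Icc_self hy) (Set.Ioo_subset_Icc_self hc) (hφy.trans hφc.symm)

theorem q1_eq_q2_unique_root :
    ∃! c : ℝ, c ∈ Set.Ioo ((2 * π + 10) / (7 * π)) 1 ∧ q₁ c = q₂ c := by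
  set a := (2 * π + 10) / (7 * π)
  have hpi := pi_pos
  have ha₀ : 0 < a := by positivity
  have ha₁ : a < 1 := by rw [div_lt_one (by positivity)]; linarith [pi_gt_three]
  have ha : 7 * π * a = 2 * π + 10 := by simp only [a]; field_simp
  have hf {c : ℝ} (hc : a ≤ c) (hc₁ : c < 1) : 0 < √(1 - c ^ 2) - c * arccos c :=
    sqrt_one_sub_sq_sub_mul_arccos_pos (by linarith) hc₁
  refine (existsUnique_congr fun c => and_congr_right fun hc => ?_).2
    (existsUnique_mem_Ioo_eq_zero_of_strictMonoOn ha₁.le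
      (by fun_prop)
      (strictMonoOn_sub_sqrt_one_sub_sq_sub_mul_arccos.mono
        (Set.Icc_subset_Icc (by linarith) le_rfl))
      (by have := hf le_rfl ha₁; linarith)
      (by norm_num; linarith [pi_gt_three]))
  refine q₁_eq_q₂_iff (hf hc.1.le hc.2) ?_
  rw [sub_pos, div_lt_iff₀ hpi]
  nlinarith [hc.1]
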